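/- arXiv:1005.0786 — 3 statements merged into one kernel-verified Lean document; each statement's English description precedes it below -/
import Mathlib

section
/- Let k be a field of characteristic zero, R = MvPolynomial (Fin n) k, b ≥ 1, and let a : Fin n → k determine the maximal ideal m_a generated by the X i − C (a i). Then a polynomial f belongs to m_a^b if and only if every iterated partial derivative of f of total order strictly less than b vanishes at a (i.e., evaluates to 0 under the evaluation map at a). -/
/-!
Translating by `a` carries `m_a` to the ideal of the variables, whose `b`-th power consists of the
polynomials without monomials of total degree `< b`. Differentiating along a list of variables and
taking the constant term reads off the coefficient of the corresponding monomial, up to a nonzero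
integer factor, which is harmless in characteristic zero.
-/

open MvPolynomial

lemma Finsupp.card_toMultiset_eq_degree {σ : Type*} (d : σ →₀ ℕ) :
    Multiset.card (Finsupp.toMultiset d) = d.degree :=
  Finsupp.card_toMultiset d

lemma Multiset.degree_toFinsupp {σ : Type*} [DecidableEq σ] (s : Multiset σ) :
    (Multiset.toFinsupp s).degree = Multiset.card s := by
  rw [← Finsupp.card_toMultiset_eq_degree, Multiset.toFinsupp_toMultiset]

namespace MvPolynomial

variable {σ R : Type*} [CommRing R]

noncomputable def shift (a : σ → R) : MvPolynomial σ R ≃ₐ[R] MvPolynomial σ R :=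
  AlgEquiv.ofAlgHom (aeval fun i => X i + C (a i)) (aeval fun i => X i - C (a i))
    (algHom_ext fun i => by simp) (algHom_ext fun i => by simp)

@[simp]
lemma shift_X (a : σ → R) (i : σ) : shift a (X i) = X i + C (a i) :=
  aeval_X _ i

@[simp]
lemma shift_C (a : σ → R) (r : R) : shift a (C r) = C r :=
  (shift a).commutes r

lemma map_shift_span_X_sub_C (a : σ → R) :
    (Ideal.span (Set.range fun i => X i - C (a i))).map (shift a) = idealOfVars σ R := by
  rw [Ideal.map_span, ← Set.range_comp]
  congr 2
  funext i
  simp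

lemma mem_span_X_sub_C_pow_iff (a : σ → R) (b : ℕ) (f : MvPolynomial σ R) :
    f ∈ Ideal.span (Set.range fun i => X i - C (a i)) ^ b ↔
      shift a f ∈ idealOfVars σ R ^ b := by
  rw [← map_shift_span_X_sub_C, ← Ideal.map_pow]
  exact (Ideal.apply_mem_of_equiv_iff (f := (shift a).toRingEquiv)).symm

lemma eval_shift (a x : σ → R) (g : MvPolynomial σ R) :
    eval x (shift a g) = eval (x + a) g := by
  induction g using MvPolynomial.induction_on with
  | C r => simp
  | add p q hp hq => simp only [map_add, hp, hq]
  | mul_X p i hp => simp [hp]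

lemma constantCoeff_shift (a : σ → R) (g : MvPolynomial σ R) :
    constantCoeff (shift a g) = eval a g := by
  rw [← eval_zero, eval_shift, zero_add]

lemma pderiv_shift (a : σ → R) (i : σ) (g : MvPolynomial σ R) :
    pderiv i (shift a g) = shift a (pderiv i g) := by
  classical
  induction g using MvPolynomial.induction_on with
  | C r => simp
  | add p q hp hq => simp only [map_add, hp, hq]
  | mul_X p j hp => simp [hp, pderiv_X, Pi.single_apply, apply_ite (shift a)]

lemma foldl_pderiv_shift (a : σ → R) (l : List σ) (g : MvPolynomial σ R) :
    l.foldl (fun g i => pderiv i g) (shift a g) =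
      shift a (l.foldl (fun g i => pderiv i g) g) := by
  induction l generalizing g with
  | nil => rfl
  | cons i l ih => simp only [List.foldl_cons, pderiv_shift, ih]

lemma coeff_foldl_pderiv [DecidableEq σ] (l : List σ) (g : MvPolynomial σ R)
    (d : σ →₀ ℕ) :
    ∃ c : ℕ, c ≠ 0 ∧ coeff d (l.foldl (fun g i => pderiv i g) g) =
      c • coeff (d + Multiset.toFinsupp (l : Multiset σ)) g := by
  induction l generalizing g with
  | nil => exact ⟨1, one_ne_zero, by simp⟩
  | cons i l ih =>
    obtain ⟨c, hc, h⟩ := ih (pderiv i g)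
    refine ⟨c * ((d + Multiset.toFinsupp (l : Multiset σ)) i + 1), by positivity, ?_⟩
    rw [List.foldl_cons, h, coeff_pderiv, ← Multiset.cons_coe, ← Multiset.singleton_add,
      Multiset.toFinsupp_add, Multiset.toFinsupp_singleton, add_comm (Finsupp.single i 1),
      ← add_assoc, nsmul_eq_mul, nsmul_eq_mul]
    push_cast
    ring

lemma forall_coeff_eq_zero_iff_constantCoeff_foldl_pderiv [IsAddTorsionFree R]
    (g : MvPolynomial σ R) (b : ℕ) :
    (∀ d : σ →₀ ℕ, d.degree < b → coeff d g = 0) ↔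
      ∀ l : List σ, l.length < b → constantCoeff (l.foldl (fun g i => pderiv i g) g) = 0 := by
  classical
  constructor
  · intro h l hl
    obtain ⟨c, -, hc⟩ := coeff_foldl_pderiv l g 0
    rw [constantCoeff_eq, hc, zero_add,
      h _ (by rwa [Multiset.degree_toFinsupp, Multiset.coe_card]), smul_zero]
  · intro h d hd
    set l := (Finsupp.toMultiset d).toList
    obtain ⟨c, hc, hcoeff⟩ := coeff_foldl_pderiv l g 0
    have hl : Multiset.toFinsupp (l : Multiset σ) = d := by
      rw [Multiset.coe_toList, Finsupp.toMultiset_toFinsupp]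
    have h0 := h l (by rwa [Multiset.length_toList, Finsupp.card_toMultiset_eq_degree])
    rwa [constantCoeff_eq, hcoeff, zero_add, hl, nsmul_eq_zero_iff_right hc] at h0

end MvPolynomial

theorem order_ge_iff_derivatives_vanish_general
    {k : Type*} [Field k] [CharZero k] (n b : ℕ)
    (a : Fin n → k) (f : MvPolynomial (Fin n) k) :
    f ∈ (Ideal.span (Set.range fun i : Fin n => X i - C (a i))) ^ b ↔
      ∀ l : List (Fin n), l.length < b →
        eval a (l.foldl (fun g i => pderiv i g) f) = 0 := by
  rw [mem_span_X_sub_C_pow_iff, mem_pow_idealOfVars_iff',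
    forall_coeff_eq_zero_iff_constantCoeff_foldl_pderiv]
  simp only [foldl_pderiv_shift, constantCoeff_shift]

/-- pointwise order criterion via iterated partial derivatives. -/
theorem order_ge_iff_derivatives_vanish
    {k : Type*} [Field k] [CharZero k] (n b : ℕ) (hb : 1 ≤ b)
    (a : Fin n → k) (f : MvPolynomial (Fin n) k) :
    f ∈ (Ideal.span (Set.range fun i : Fin n => X i - C (a i))) ^ b ↔
      ∀ l : List (Fin n), l.length < b →
        eval a (l.foldl (fun g i => pderiv i g) f) = 0 :=
  order_ge_iff_derivatives_vanish_general n b a f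
end

section
/- Let R be a commutative ring, b a positive natural number, x an element of R, and f = x^b * g for some g ∈ R. Then for any sequence of at most b−1 derivations D_1, …, D_j of R (j ≤ b−1), the element D_1 (D_2 (⋯ (D_j f))) lies in the principal ideal (x). -/
private lemma deriv_dvd {R : Type*} [CommRing R] (x : R) (D : Derivation ℤ R R)
    (k : ℕ) (f : R) (h : x ^ k ∣ f) : x ^ (k - 1) ∣ D f := by
  obtain ⟨g, rfl⟩ := h
  rw [Derivation.leibniz]
  cases k with
  | zero => simp
  | succ n =>
    rw [Derivation.leibniz_pow]
    simp only [smul_eq_mul, Nat.add_sub_cancel, nsmul_eq_mul]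
    apply dvd_add
    · exact Dvd.dvd.mul_right (pow_dvd_pow x (Nat.le_succ n)) _
    · exact dvd_mul_of_dvd_right (dvd_mul_of_dvd_right (dvd_mul_right _ _) _) _

/-- if `f = x^b * g`, then any iterated derivative of `f` of order
at most `b − 1` lies in the principal ideal `(x)`. -/
theorem iterated_derivation_mem_span_of_pow_dvd
    {R : Type*} [CommRing R] (b : ℕ) (hb : 1 ≤ b) (x g : R)
    (f : R) (hf : f = x ^ b * g)
    (l : List (Derivation ℤ R R)) (hl : l.length ≤ b - 1) :
    l.foldr (fun D r => D r) f ∈ Ideal.span {x} := by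
  have key : ∀ (l : List (Derivation ℤ R R)) (f : R), x ^ b ∣ f →
      x ^ (b - l.length) ∣ l.foldr (fun D r => D r) f := by
    intro l
    induction l with
    | nil => intro f h; simpa using h
    | cons D t ih =>
      intro f h
      have := deriv_dvd x D (b - t.length) _ (ih f h)
      simpa [Nat.sub_sub] using this
  have h := key l f ⟨g, hf⟩
  rw [Ideal.mem_span_singleton]
  exact dvd_trans (dvd_pow_self x (by omega)) h
end

section
/- Let I be an ideal of MvPolynomial (Fin n) k (k a field of characteristic zero) such that every element of I is divisible by X_1^b. Then the ideal Δ^{b−1}(I) is contained in the principal ideal (X_1), where Δ(J) denotes the ideal generated by J together with all partial derivatives ∂f/∂X_i of elements f ∈ J, and Δ^{b−1} is the (b−1)-fold iterate. -/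
/-! A derivation lowers the order of divisibility by `X i₀` by at most one, so each application
of `Δ` maps `(X i₀ ^ (m + 1))` into `(X i₀ ^ m)`; after `b - 1` steps `(X i₀ ^ b)` lands in `(X i₀)`. -/

open MvPolynomial

/-- The derivative extension `Δ(J) = J + (∂f/∂X_i : f ∈ J, i)` of an ideal of a
multivariate polynomial ring. -/
noncomputable def deltaIdeal {k : Type*} [Field k] {n : ℕ}
    (J : Ideal (MvPolynomial (Fin n) k)) : Ideal (MvPolynomial (Fin n) k) :=
  J ⊔ Ideal.span {g | ∃ f ∈ J, ∃ i : Fin n, g = pderiv i f}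

theorem Derivation.pow_dvd_apply_of_pow_succ_dvd {R A : Type*} [CommSemiring R]
    [CommSemiring A] [Algebra R A] (D : Derivation R A A) {a f : A} {m : ℕ}
    (h : a ^ (m + 1) ∣ f) : a ^ m ∣ D f := by
  obtain ⟨g, rfl⟩ := h
  rw [D.leibniz, D.leibniz_pow, Nat.add_sub_cancel]
  simp only [smul_eq_mul, nsmul_eq_mul]
  exact dvd_add ((pow_dvd_pow a m.le_succ).mul_right _)
    (((dvd_mul_right _ _).mul_left _).mul_left _)

theorem deltaIdeal_le_span_X_pow {k : Type*} [Field k] {n : ℕ} (i₀ : Fin n) (m : ℕ)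
    {J : Ideal (MvPolynomial (Fin n) k)} (hJ : J ≤ Ideal.span {X i₀ ^ (m + 1)}) :
    deltaIdeal J ≤ Ideal.span {X i₀ ^ m} := by
  refine sup_le (hJ.trans ?_) (Ideal.span_le.mpr ?_)
  · exact Ideal.span_singleton_le_span_singleton.mpr (pow_dvd_pow _ m.le_succ)
  · rintro _ ⟨f, hf, i, rfl⟩
    exact Ideal.mem_span_singleton.mpr
      ((pderiv i).pow_dvd_apply_of_pow_succ_dvd (Ideal.mem_span_singleton.mp (hJ hf)))

theorem deltaIdeal_iterate_le_span_X_pow {k : Type*} [Field k] {n : ℕ} (i₀ : Fin n)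
    (m j : ℕ) {J : Ideal (MvPolynomial (Fin n) k)} (hJ : J ≤ Ideal.span {X i₀ ^ (m + j)}) :
    deltaIdeal^[j] J ≤ Ideal.span {X i₀ ^ m} := by
  induction j generalizing J with
  | zero => simpa using hJ
  | succ j ih =>
    rw [Function.iterate_succ_apply]
    exact ih (deltaIdeal_le_span_X_pow i₀ (m + j) hJ)

theorem deltaIdeal_iterate_le_span_of_pow_dvd_general
    {k : Type*} [Field k] {n : ℕ} (i₀ : Fin n) (b : ℕ) (hb : 1 ≤ b)
    (I : Ideal (MvPolynomial (Fin n) k))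
    (hI : ∀ f ∈ I, (X i₀ : MvPolynomial (Fin n) k) ^ b ∣ f) :
    (deltaIdeal)^[b - 1] I ≤ Ideal.span {(X i₀ : MvPolynomial (Fin n) k)} := by
  have hI' : I ≤ Ideal.span {X i₀ ^ (1 + (b - 1))} := fun f hf =>
    Ideal.mem_span_singleton.mpr (by rw [Nat.add_sub_cancel' hb]; exact hI f hf)
  simpa using deltaIdeal_iterate_le_span_X_pow i₀ 1 (b - 1) hI'

/-- if every element of `I` is divisible by `X i₀ ^ b`, then
`Δ^{b−1}(I) ⊆ (X i₀)`. -/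
theorem deltaIdeal_iterate_le_span_of_pow_dvd
    {k : Type*} [Field k] [CharZero k] {n : ℕ} (i₀ : Fin n) (b : ℕ) (hb : 1 ≤ b)
    (I : Ideal (MvPolynomial (Fin n) k))
    (hI : ∀ f ∈ I, (X i₀ : MvPolynomial (Fin n) k) ^ b ∣ f) :
    (deltaIdeal)^[b - 1] I ≤ Ideal.span {(X i₀ : MvPolynomial (Fin n) k)} :=
  deltaIdeal_iterate_le_span_of_pow_dvd_general i₀ b hb I hI
end
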